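/- arXiv:1907.12091 — 4 statements merged into one kernel-verified Lean document; each statement's English description precedes it below -/
import Mathlib

section
/- Let c ≥ 1 and let l_1, ..., l_c and n_1, ..., n_c be positive reals with n_i ≥ 2. Then √(∑_{i=1}^c l_i) · ∏_{i=1}^c (1 + l_i/n_i) ≥ 2 ∑_{i=1}^c l_i/√(n_i). -/
open Finset Real

lemma one_add_sum_le_prod_one_add' {ι : Type*} (s : Finset ι) (x : ι → ℝ)
    (hx : ∀ i, 0 ≤ x i) : 1 + ∑ i ∈ s, x i ≤ ∏ i ∈ s, (1 + x i) := by
  classical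
  induction s using Finset.induction with
  | empty => simp
  | @insert a s h ih =>
    rw [Finset.sum_insert h, Finset.prod_insert h]
    have hS : 0 ≤ ∑ i ∈ s, x i := Finset.sum_nonneg fun i _ => hx i
    nlinarith [hx a, mul_nonneg (hx a) hS]

theorem sqrt_sum_mul_prod_ge (c : ℕ) (hc : 1 ≤ c) (l n : Fin c → ℝ)
    (hl : ∀ i, 0 < l i) (hn : ∀ i, 2 ≤ n i) :
    2 * ∑ i, l i / Real.sqrt (n i) ≤
      Real.sqrt (∑ i, l i) * ∏ i, (1 + l i / n i) := by
  have hnpos : ∀ i, (0:ℝ) < n i := fun i => lt_of_lt_of_le two_pos (hn i)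
  set S := ∑ i, l i with hSdef
  set T := ∑ i, l i / n i with hTdef
  set A := ∑ i, l i / Real.sqrt (n i) with hAdef
  have hTnn : 0 ≤ T := Finset.sum_nonneg fun i _ => le_of_lt (div_pos (hl i) (hnpos i))
  have hSnn : 0 ≤ S := Finset.sum_nonneg fun i _ => (hl i).le
  -- Cauchy-Schwarz: A^2 ≤ S * T
  have hCS : A ^ 2 ≤ S * T := by
    apply Finset.sum_sq_le_sum_mul_sum_of_sq_eq_mul
    · exact fun i _ => (hl i).le
    · exact fun i _ => le_of_lt (div_pos (hl i) (hnpos i))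
    · intro i _
      have hs : Real.sqrt (n i) ^ 2 = n i := Real.sq_sqrt (hnpos i).le
      field_simp
      rw [hs]
  have hAnn : 0 ≤ A := Finset.sum_nonneg fun i _ =>
    div_nonneg (hl i).le (Real.sqrt_nonneg _)
  have hA : A ≤ Real.sqrt S * Real.sqrt T := by
    rw [← Real.sqrt_mul hSnn]
    exact (Real.le_sqrt hAnn (mul_nonneg hSnn hTnn)).mpr hCS
  -- 2 √T ≤ 1 + T
  have h2T : 2 * Real.sqrt T ≤ 1 + T := by
    nlinarith [Real.sq_sqrt hTnn, sq_nonneg (Real.sqrt T - 1), Real.sqrt_nonneg T]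
  have hprod : 1 + T ≤ ∏ i, (1 + l i / n i) := by
    exact one_add_sum_le_prod_one_add' _ _ fun i => le_of_lt (div_pos (hl i) (hnpos i))
  calc 2 * A ≤ 2 * (Real.sqrt S * Real.sqrt T) := by linarith
    _ = Real.sqrt S * (2 * Real.sqrt T) := by ring
    _ ≤ Real.sqrt S * (1 + T) := by
        exact mul_le_mul_of_nonneg_left (h2T) (Real.sqrt_nonneg _)
    _ ≤ Real.sqrt S * ∏ i, (1 + l i / n i) :=
        mul_le_mul_of_nonneg_left hprod (Real.sqrt_nonneg _)
end

section
/- Define ρ = (4/3)^(1/4) and λ(k) = (1/(k(k−1))) · log(k^k / (ρ · k!)) for integers k ≥ 2. Then λ(k) > 0 for all k ≥ 2 and λ is strictly decreasing on integers k ≥ 2. -/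
noncomputable def rho : ℝ := (4/3 : ℝ) ^ ((1 : ℝ)/4)

noncomputable def lam (k : ℕ) : ℝ :=
  (1 / ((k : ℝ) * ((k : ℝ) - 1))) * Real.log ((k : ℝ) ^ k / (rho * k.factorial))

lemma rho_pos : 0 < rho := Real.rpow_pos_of_pos (by norm_num) _

lemma log_rho : Real.log rho = (1/4) * Real.log (4/3) := by
  unfold rho
  rw [Real.log_rpow (by norm_num)]

noncomputable def Lf (k : ℕ) : ℝ :=
  (k : ℝ) * Real.log k - Real.log rho - Real.log (k.factorial)

noncomputable def gf (k : ℕ) : ℝ :=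
  Lf k - ((k : ℝ) * ((k : ℝ) - 1) / 2) * (Real.log ((k : ℝ) + 1) - Real.log k)

lemma log_eq_Lf (k : ℕ) (hk : 2 ≤ k) :
    Real.log ((k : ℝ) ^ k / (rho * k.factorial)) = Lf k := by
  have hk0 : (0:ℝ) < (k:ℝ) := by exact_mod_cast Nat.zero_lt_of_lt hk
  have hkpow : ((k:ℝ)) ^ k ≠ 0 := pow_ne_zero _ (ne_of_gt hk0)
  have hfac : ((k.factorial : ℝ)) ≠ 0 := by
    exact_mod_cast Nat.factorial_ne_zero k
  rw [Real.log_div hkpow (mul_ne_zero (ne_of_gt rho_pos) hfac),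
    Real.log_mul (ne_of_gt rho_pos) hfac, Real.log_pow]
  unfold Lf; ring

lemma Lf_succ (k : ℕ) (hk : 1 ≤ k) :
    Lf (k+1) = Lf k + (k : ℝ) * (Real.log ((k:ℝ)+1) - Real.log k) := by
  have hk0 : (0:ℝ) < (k:ℝ) := by exact_mod_cast hk
  have hfac : ((k.factorial : ℝ)) ≠ 0 := by exact_mod_cast Nat.factorial_ne_zero k
  have h1 : ((k+1 : ℕ).factorial : ℝ) = ((k:ℝ)+1) * (k.factorial : ℝ) := by
    rw [Nat.factorial_succ]; push_cast; ring
  unfold Lf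
  rw [h1, Real.log_mul (by positivity) hfac]
  push_cast
  ring

lemma log_gap (k : ℕ) (hk : 1 ≤ k) :
    Real.log ((k:ℝ)+2) - Real.log ((k:ℝ)+1) < Real.log ((k:ℝ)+1) - Real.log k := by
  have hk0 : (0:ℝ) < (k:ℝ) := by exact_mod_cast hk
  have h1 : (0:ℝ) < (k:ℝ) * ((k:ℝ)+2) := by positivity
  have h2 : (k:ℝ) * ((k:ℝ)+2) < ((k:ℝ)+1)^2 := by nlinarith
  have := Real.log_lt_log h1 h2
  rw [Real.log_mul (ne_of_gt hk0) (by positivity), show ((k:ℝ)+1)^2 = ((k:ℝ)+1)*((k:ℝ)+1) by ring,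
    Real.log_mul (by positivity) (by positivity)] at this
  linarith

lemma gf_pos (k : ℕ) (hk : 2 ≤ k) : 0 < gf k := by
  induction k, hk using Nat.le_induction with
  | base =>
      have h43 : (0:ℝ) < Real.log (4/3) := Real.log_pos (by norm_num)
      have h4 : Real.log (4/3) = 2 * Real.log 2 - Real.log 3 := by
        rw [Real.log_div (by norm_num) (by norm_num),
          show (4:ℝ) = 2^2 by norm_num, Real.log_pow]
        push_cast; ring
      have hfac : (((2:ℕ).factorial : ℕ) : ℝ) = 2 := by norm_num [Nat.factorial]
      unfold gf Lf
      rw [hfac, log_rho]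
      push_cast
      rw [show ((2:ℝ)+1) = 3 by norm_num]
      nlinarith
  | succ n hn ih =>
      have hn0 : (0:ℝ) < (n:ℝ) := by exact_mod_cast Nat.zero_lt_of_lt hn
      have hgap := log_gap n (le_trans one_le_two hn)
      have hLs := Lf_succ n (le_trans one_le_two hn)
      have key : gf (n+1) - gf n =
          ((n:ℝ) * ((n:ℝ)+1) / 2) *
            ((Real.log ((n:ℝ)+1) - Real.log n) - (Real.log ((n:ℝ)+2) - Real.log ((n:ℝ)+1))) := by
        unfold gf
        rw [hLs]
        push_cast
        ring
      have hpos : 0 < gf (n+1) - gf n := by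
        rw [key]
        have : 0 < (Real.log ((n:ℝ)+1) - Real.log n) - (Real.log ((n:ℝ)+2) - Real.log ((n:ℝ)+1)) := by
          linarith
        positivity
      linarith

lemma Lf_pos (k : ℕ) (hk : 2 ≤ k) : 0 < Lf k := by
  have hg := gf_pos k hk
  have hk0 : (0:ℝ) < (k:ℝ) := by exact_mod_cast Nat.zero_lt_of_lt hk
  have hk1 : (1:ℝ) ≤ (k:ℝ) := by exact_mod_cast le_trans one_le_two hk
  have hΔ : 0 ≤ Real.log ((k:ℝ)+1) - Real.log k :=
    sub_nonneg.mpr (Real.log_le_log hk0 (by linarith))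
  have hc : (0:ℝ) ≤ (k:ℝ) * ((k:ℝ) - 1) / 2 := by nlinarith
  unfold gf at hg
  nlinarith [mul_nonneg hc hΔ]

theorem lambda_pos_and_decreasing :
    (∀ k : ℕ, 2 ≤ k → 0 < lam k) ∧ (∀ k : ℕ, 2 ≤ k → lam (k+1) < lam k) := by
  have hlam : ∀ k : ℕ, 2 ≤ k → lam k = Lf k / ((k : ℝ) * ((k : ℝ) - 1)) := by
    intro k hk
    unfold lam
    rw [log_eq_Lf k hk, one_div_mul_eq_div]
  have hD : ∀ k : ℕ, 2 ≤ k → (0:ℝ) < (k : ℝ) * ((k : ℝ) - 1) := by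
    intro k hk
    have hk2 : (2:ℝ) ≤ (k:ℝ) := by exact_mod_cast hk
    nlinarith
  constructor
  · intro k hk
    rw [hlam k hk]
    exact div_pos (Lf_pos k hk) (hD k hk)
  · intro k hk
    have hk2 : (2:ℝ) ≤ (k:ℝ) := by exact_mod_cast hk
    have hg := gf_pos k hk
    have hLs := Lf_succ k (le_trans one_le_two hk)
    rw [hlam k hk, hlam (k+1) (by omega)]
    rw [div_lt_div_iff₀ (hD (k+1) (by omega)) (hD k hk)]
    push_cast
    unfold gf at hg
    rw [hLs]
    nlinarith [mul_pos (show (0:ℝ) < 2*(k:ℝ) by linarith) hg]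
end

section
/- Define ρ = (4/3)^(1/4), b(1) = 1 and b(k) = ((k−1)! · ρ)^(1/(k−1)) for integers k ≥ 2. Then the sequence b(k)/k is strictly decreasing for k ≥ 1, i.e., b(k+1)/(k+1) < b(k)/k for all k ≥ 1. -/
noncomputable def b : ℕ → ℝ
  | 0 => 1
  | 1 => 1
  | (k+2) => (((k+1).factorial : ℝ) * rho) ^ ((1 : ℝ)/(k+1))

lemma one_le_rho : 1 ≤ rho := Real.one_le_rpow (by norm_num) (by norm_num)

lemma rho_pow_four : rho ^ (4:ℕ) = 4/3 := by
  rw [rho, ← Real.rpow_natCast ((4/3:ℝ) ^ ((1:ℝ)/4)) 4, ← Real.rpow_mul (by norm_num)]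
  norm_num

lemma rho_lt_two : rho < 2 := by
  have h := rho_pow_four
  nlinarith [rho_pos, sq_nonneg (rho - 1), sq_nonneg (rho^2 - 1)]

-- exp(3/4) < 2 * rho
lemma exp_lt_two_rho : Real.exp (3/4) < 2 * rho := by
  have h4 : (Real.exp (3/4)) ^ (4:ℕ) < (2*rho) ^ (4:ℕ) := by
    have h1 : Real.exp (3/4) ^ (4:ℕ) = Real.exp 3 := by
      rw [← Real.exp_nat_mul]; norm_num
    have h2 : Real.exp 3 < (2.7182818286:ℝ)^(3:ℕ) := by
      have := Real.exp_one_lt_d9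
      calc Real.exp 3 = Real.exp 1 ^ (3:ℕ) := by rw [← Real.exp_nat_mul]; norm_num
        _ < (2.7182818286:ℝ)^(3:ℕ) :=
            pow_lt_pow_left₀ this (Real.exp_pos 1).le (by norm_num)
    have h3 : (2*rho)^(4:ℕ) = 64/3 := by
      rw [mul_pow, rho_pow_four]; norm_num
    rw [h1, h3]
    calc Real.exp 3 < (2.7182818286:ℝ)^(3:ℕ) := h2
      _ < 64/3 := by norm_num
  exact lt_of_pow_lt_pow_left₀ 4 (by nlinarith [rho_pos]) h4

-- factorial lower bound : for j ≥ 4, 2 * ((j+1)/e)^j ≤ j!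
lemma fact_lb (j : ℕ) (hj : 4 ≤ j) :
    2 * (((j:ℝ)+1)/Real.exp 1)^j ≤ (j.factorial : ℝ) := by
  induction j, hj using Nat.le_induction with
  | base =>
    have he : (2.7182818283:ℝ) < Real.exp 1 := Real.exp_one_gt_d9
    have hpos : (0:ℝ) < Real.exp 1 := Real.exp_pos 1
    have h2 : (((4:ℕ):ℝ)+1)/Real.exp 1 ≤ 5/2.7182818283 := by
      push_cast
      rw [div_le_div_iff₀ hpos (by norm_num)]
      nlinarith
    calc 2 * ((((4:ℕ):ℝ)+1)/Real.exp 1)^(4:ℕ)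
        ≤ 2 * ((5:ℝ)/2.7182818283)^(4:ℕ) := by gcongr
      _ ≤ ((4:ℕ).factorial : ℝ) := by norm_num [Nat.factorial]
  | succ j hj ih =>
    have hpos : (0:ℝ) < Real.exp 1 := Real.exp_pos 1
    -- (1 + 1/(j+1))^(j+1) ≤ e
    have hkey : (((j:ℝ)+2))^(j+1) ≤ Real.exp 1 * ((j:ℝ)+1)^(j+1) := by
      have h := Real.add_one_le_exp (1/((j:ℝ)+1))
      have h2 : (1/((j:ℝ)+1) + 1)^(j+1) ≤ Real.exp (1/((j:ℝ)+1)) ^ (j+1) :=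
        pow_le_pow_left₀ (by positivity) h (j+1)
      have h3 : Real.exp (1/((j:ℝ)+1)) ^ (j+1) = Real.exp 1 := by
        rw [← Real.exp_nat_mul]
        congr 1
        push_cast
        field_simp
      rw [h3] at h2
      have h4 : (1/((j:ℝ)+1) + 1) = ((j:ℝ)+2)/((j:ℝ)+1) := by field_simp; ring
      rw [h4, div_pow] at h2
      calc ((j:ℝ)+2)^(j+1) = (((j:ℝ)+2)^(j+1) / ((j:ℝ)+1)^(j+1)) * ((j:ℝ)+1)^(j+1) := by
            field_simp
        _ ≤ Real.exp 1 * ((j:ℝ)+1)^(j+1) := by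
            apply mul_le_mul_of_nonneg_right h2 (by positivity)
    have hchain : 2 * (((j:ℝ)+2)/Real.exp 1)^(j+1) ≤ ((j:ℝ)+1) * (2 * (((j:ℝ)+1)/Real.exp 1)^j) := by
      have hps : ((j:ℝ)+1)^(j+1) = ((j:ℝ)+1)^j * ((j:ℝ)+1) := pow_succ _ _
      have hnum : 2 * ((j:ℝ)+2)^(j+1) ≤ 2 * (((j:ℝ)+1) * ((j:ℝ)+1)^j) * Real.exp 1 := by
        nlinarith [hkey]
      calc 2 * (((j:ℝ)+2)/Real.exp 1)^(j+1)
          = 2 * ((j:ℝ)+2)^(j+1) / Real.exp 1 ^ (j+1) := by rw [div_pow]; ring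
        _ ≤ 2 * (((j:ℝ)+1) * ((j:ℝ)+1)^j) * Real.exp 1 / Real.exp 1 ^ (j+1) := by gcongr
        _ = ((j:ℝ)+1) * (2 * (((j:ℝ)+1)/Real.exp 1)^j) := by
            rw [div_pow, pow_succ]
            field_simp
    have step : 2 * (((j:ℝ)+1+1)/Real.exp 1)^(j+1) ≤ ((j:ℝ)+1) * (j.factorial : ℝ) := by
      calc 2 * (((j:ℝ)+1+1)/Real.exp 1)^(j+1) = 2 * (((j:ℝ)+2)/Real.exp 1)^(j+1) := by ring_nf
        _ ≤ ((j:ℝ)+1) * (2 * (((j:ℝ)+1)/Real.exp 1)^j) := hchain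
        _ ≤ ((j:ℝ)+1) * (j.factorial : ℝ) := by
            apply mul_le_mul_of_nonneg_left ih (by positivity)
    have hfin : (((j+1).factorial : ℕ) : ℝ) = ((j:ℝ)+1) * (j.factorial : ℝ) := by
      push_cast [Nat.factorial_succ]; ring
    have hcast : (((j+1:ℕ)):ℝ)+1 = (j:ℝ)+1+1 := by push_cast; ring
    rw [hfin, hcast]
    exact step

-- log lower bound:  1 - 1/x ≤ log x
lemma log_lb {x : ℝ} (hx : 0 < x) : 1 - 1/x ≤ Real.log x := by
  have h := Real.log_le_sub_one_of_pos (show (0:ℝ) < x⁻¹ by positivity)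
  rw [Real.log_inv] at h
  rw [one_div]
  linarith

-- power lower bound : (j+2)^(j(j+1)) ≥ exp(j + 1/4) * (j+1)^(j(j+1))
lemma pow_lb (j : ℕ) :
    Real.exp ((j:ℝ) - 3/4) * ((j:ℝ)+1)^(j*(j+1)) ≤ ((j:ℝ)+2)^(j*(j+1)) := by
  set x : ℝ := (j:ℝ) with hxdef
  have hx0 : 0 ≤ x := Nat.cast_nonneg j
  have h1 : (0:ℝ) < x + 1 := by linarith
  have h15 : (0:ℝ) < x + 3/2 := by linarith
  have h2 : (0:ℝ) < x + 2 := by linarith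
  -- log((x+2)/(x+1)) ≥ 1/(2x+3) + 1/(2x+4)
  have hla : 1 - (x+1)/(x+3/2) ≤ Real.log ((x+3/2)/(x+1)) := by
    have := log_lb (show (0:ℝ) < (x+3/2)/(x+1) by positivity)
    rwa [one_div, inv_div] at this
  have hlb : 1 - (x+3/2)/(x+2) ≤ Real.log ((x+2)/(x+3/2)) := by
    have := log_lb (show (0:ℝ) < (x+2)/(x+3/2) by positivity)
    rwa [one_div, inv_div] at this
  have hsplit : Real.log ((x+2)/(x+1)) = Real.log ((x+2)/(x+3/2)) + Real.log ((x+3/2)/(x+1)) := by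
    rw [← Real.log_mul (by positivity) (by positivity)]
    congr 1
    field_simp
  have hL : 1 - (x+1)/(x+3/2) + (1 - (x+3/2)/(x+2)) ≤ Real.log ((x+2)/(x+1)) := by
    rw [hsplit]; linarith
  -- main log inequality
  have hmain : x - 3/4 ≤ (x*(x+1)) * Real.log ((x+2)/(x+1)) := by
    have hS : x - 3/4 ≤ (x*(x+1)) * (1 - (x+1)/(x+3/2) + (1 - (x+3/2)/(x+2))) := by
      have e1 : (x*(x+1)) * (1 - (x+1)/(x+3/2) + (1 - (x+3/2)/(x+2)))
          = (x*(x+1)) * ((1/2)*(x+2) + (1/2)*(x+3/2)) / ((x+3/2)*(x+2)) := by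
        field_simp
        ring
      rw [e1, le_div_iff₀ (by positivity)]
      nlinarith [hx0]
    calc x - 3/4 ≤ (x*(x+1)) * (1 - (x+1)/(x+3/2) + (1 - (x+3/2)/(x+2))) := hS
      _ ≤ (x*(x+1)) * Real.log ((x+2)/(x+1)) := by
          apply mul_le_mul_of_nonneg_left hL (by positivity)
  -- convert to powers
  have hpow : Real.exp (x - 3/4) ≤ ((x+2)/(x+1))^(j*(j+1)) := by
    have h5 : ((x+2)/(x+1))^(j*(j+1)) = Real.exp ((j*(j+1) : ℕ) * Real.log ((x+2)/(x+1))) := by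
      rw [Real.exp_nat_mul, Real.exp_log (by positivity)]
    rw [h5]
    apply Real.exp_le_exp.mpr
    have hc : ((j*(j+1) : ℕ) : ℝ) = x*(x+1) := by push_cast; ring
    rw [hc]
    exact hmain
  calc Real.exp (x - 3/4) * (x+1)^(j*(j+1))
      ≤ ((x+2)/(x+1))^(j*(j+1)) * (x+1)^(j*(j+1)) := by
        apply mul_le_mul_of_nonneg_right hpow (by positivity)
    _ = (x+2)^(j*(j+1)) := by
        rw [div_pow]
        field_simp

-- Key inequality : (j+1)^(j(j+2)) < j! * rho * (j+2)^(j(j+1))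
lemma key (j : ℕ) (hj : 1 ≤ j) :
    ((j:ℝ)+1)^(j*(j+2)) < (j.factorial : ℝ) * rho * ((j:ℝ)+2)^(j*(j+1)) := by
  rcases lt_or_ge j 4 with h4 | h4
  · interval_cases j
    · norm_num [Nat.factorial]; nlinarith [one_le_rho]
    · norm_num [Nat.factorial]; nlinarith [one_le_rho]
    · norm_num [Nat.factorial]; nlinarith [one_le_rho]
  · have hA := fact_lb j h4
    have hB := pow_lb j
    have hC := exp_lt_two_rho
    have hE : (0:ℝ) < Real.exp 1 := Real.exp_pos 1
    have hEj : Real.exp 1 ^ j = Real.exp (j:ℝ) := by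
      rw [← Real.exp_nat_mul]; ring_nf
    have hEs : Real.exp (3/4) * Real.exp ((j:ℝ) - 3/4) = Real.exp (j:ℝ) := by
      rw [← Real.exp_add]; ring_nf
    have hfact : (0:ℝ) < (j.factorial : ℝ) := by exact_mod_cast j.factorial_pos
    have hA' : 2 * ((j:ℝ)+1)^j ≤ (j.factorial : ℝ) * Real.exp 1 ^ j := by
      rw [div_pow] at hA
      have h2 := mul_le_mul_of_nonneg_right hA (le_of_lt (pow_pos hE j))
      calc 2 * ((j:ℝ)+1)^j = 2 * (((j:ℝ)+1)^j / Real.exp 1 ^ j) * Real.exp 1 ^ j := by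
            field_simp
        _ ≤ (j.factorial : ℝ) * Real.exp 1 ^ j := h2
    have hsplit : ((j:ℝ)+1)^(j*(j+2)) = ((j:ℝ)+1)^j * ((j:ℝ)+1)^(j*(j+1)) := by
      rw [← pow_add]
      congr 1
      ring
    rw [hsplit]
    have main : 2 * Real.exp (j:ℝ) * (((j:ℝ)+1)^j * ((j:ℝ)+1)^(j*(j+1)))
        < 2 * Real.exp (j:ℝ) * ((j.factorial:ℝ) * rho * ((j:ℝ)+2)^(j*(j+1))) := by
      have s1 : 2*((j:ℝ)+1)^j * (Real.exp ((j:ℝ)-3/4) * ((j:ℝ)+1)^(j*(j+1)))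
          ≤ ((j.factorial:ℝ) * Real.exp 1 ^ j) * ((j:ℝ)+2)^(j*(j+1)) :=
        mul_le_mul hA' hB (by positivity) (by positivity)
      have s2 : Real.exp (3/4) * (2*((j:ℝ)+1)^j * (Real.exp ((j:ℝ)-3/4) * ((j:ℝ)+1)^(j*(j+1))))
          ≤ Real.exp (3/4) * (((j.factorial:ℝ) * Real.exp 1 ^ j) * ((j:ℝ)+2)^(j*(j+1))) :=
        mul_le_mul_of_nonneg_left s1 (Real.exp_pos _).le
      have s3 : Real.exp (3/4) * (((j.factorial:ℝ) * Real.exp 1 ^ j) * ((j:ℝ)+2)^(j*(j+1)))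
          < (2*rho) * (((j.factorial:ℝ) * Real.exp 1 ^ j) * ((j:ℝ)+2)^(j*(j+1))) := by
        apply mul_lt_mul_of_pos_right hC
        exact mul_pos (mul_pos hfact (pow_pos hE j)) (by positivity)
      calc 2 * Real.exp (j:ℝ) * (((j:ℝ)+1)^j * ((j:ℝ)+1)^(j*(j+1)))
          = Real.exp (3/4) * (2*((j:ℝ)+1)^j * (Real.exp ((j:ℝ)-3/4) * ((j:ℝ)+1)^(j*(j+1)))) := by
            rw [← hEs]; ring
        _ ≤ Real.exp (3/4) * (((j.factorial:ℝ) * Real.exp 1 ^ j) * ((j:ℝ)+2)^(j*(j+1))) := s2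
        _ < (2*rho) * (((j.factorial:ℝ) * Real.exp 1 ^ j) * ((j:ℝ)+2)^(j*(j+1))) := s3
        _ = 2 * Real.exp (j:ℝ) * ((j.factorial:ℝ) * rho * ((j:ℝ)+2)^(j*(j+1))) := by
            rw [hEj]; ring
    exact (mul_lt_mul_iff_right₀ (by positivity : (0:ℝ) < 2 * Real.exp (j:ℝ))).mp main

lemma main_ineq (j : ℕ) (hj : 1 ≤ j) :
    (((j+1).factorial : ℝ) * rho) ^ ((1:ℝ)/((j:ℝ)+1)) / ((j:ℝ)+2)
      < ((j.factorial : ℝ) * rho) ^ ((1:ℝ)/(j:ℝ)) / ((j:ℝ)+1) := by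
  have hj0 : (0:ℝ) < (j:ℝ) := by exact_mod_cast hj
  set Y : ℝ := (j.factorial : ℝ) * rho with hY
  set X : ℝ := ((j+1).factorial : ℝ) * rho with hX
  have hYpos : 0 < Y := mul_pos (by exact_mod_cast j.factorial_pos) rho_pos
  have hXpos : 0 < X := mul_pos (by exact_mod_cast (j+1).factorial_pos) rho_pos
  apply lt_of_pow_lt_pow_left₀ (j*(j+1)) (by positivity)
  rw [div_pow, div_pow]
  have e1 : (X ^ ((1:ℝ)/((j:ℝ)+1)))^(j*(j+1)) = X ^ j := by
    rw [← Real.rpow_natCast (X ^ ((1:ℝ)/((j:ℝ)+1))) (j*(j+1)), ← Real.rpow_mul hXpos.le]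
    rw [show (1:ℝ)/((j:ℝ)+1) * ((j*(j+1) : ℕ) : ℝ) = ((j:ℕ):ℝ) by push_cast; field_simp]
    exact Real.rpow_natCast X j
  have e2 : (Y ^ ((1:ℝ)/(j:ℝ)))^(j*(j+1)) = Y ^ (j+1) := by
    rw [← Real.rpow_natCast (Y ^ ((1:ℝ)/(j:ℝ))) (j*(j+1)), ← Real.rpow_mul hYpos.le]
    rw [show (1:ℝ)/(j:ℝ) * ((j*(j+1) : ℕ) : ℝ) = (((j+1):ℕ):ℝ) by push_cast; field_simp]
    exact Real.rpow_natCast Y (j+1)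
  rw [e1, e2, div_lt_div_iff₀ (by positivity) (by positivity)]
  have hXY : X = ((j:ℝ)+1) * Y := by
    rw [hX, hY]
    push_cast [Nat.factorial_succ]
    ring
  have hk := key j hj
  calc X^j * ((j:ℝ)+1)^(j*(j+1))
      = Y^j * (((j:ℝ)+1)^j * ((j:ℝ)+1)^(j*(j+1))) := by rw [hXY, mul_pow]; ring
    _ = Y^j * ((j:ℝ)+1)^(j*(j+2)) := by
        rw [← pow_add]
        congr 2
        ring
    _ < Y^j * (Y * ((j:ℝ)+2)^(j*(j+1))) := by
        apply mul_lt_mul_of_pos_left _ (pow_pos hYpos j)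
        calc ((j:ℝ)+1)^(j*(j+2)) < (j.factorial:ℝ) * rho * ((j:ℝ)+2)^(j*(j+1)) := hk
          _ = Y * ((j:ℝ)+2)^(j*(j+1)) := by rw [hY]
    _ = Y^(j+1) * ((j:ℝ)+2)^(j*(j+1)) := by rw [pow_succ]; ring

theorem b_div_k_strict_anti (k : ℕ) (hk : 1 ≤ k) :
    b (k+1) / (k+1 : ℝ) < b k / (k : ℝ) := by
  obtain ⟨m, rfl⟩ : ∃ m, k = m + 1 := ⟨k-1, by omega⟩
  rcases Nat.eq_zero_or_pos m with rfl | hm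
  · -- k = 1
    norm_num [b]
    linarith [rho_lt_two]
  · -- k = m + 1 with m ≥ 1
    obtain ⟨n, rfl⟩ : ∃ n, m = n + 1 := ⟨m-1, by omega⟩
    have h := main_ineq (n+1) (by omega)
    simp only [b]
    push_cast at h ⊢
    ring_nf at h ⊢
    exact h
end

section
/- Define ρ = (4/3)^(1/4) and b(k) = ((k−1)! · ρ)^(1/(k−1)) for integers k ≥ 2. Then for all integers n ≥ m ≥ 2, b(m) · b(n − m + 2) ≥ b(2) · b(n). -/
lemma b_eval (k : ℕ) : b (k+2) = (((k+1).factorial : ℝ) * rho) ^ ((1 : ℝ)/((k:ℝ)+1)) := rfl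

lemma b_pos (k : ℕ) : 0 < b k := by
  match k with
  | 0 => exact one_pos
  | 1 => exact one_pos
  | (k+2) =>
    rw [b_eval]
    exact Real.rpow_pos_of_pos (mul_pos (by positivity) rho_pos) _

lemma natA : ∀ p : ℕ, 1 ≤ p →
    4 * (p.factorial)^4 * (p+2)^(2*p*(p+1)) ≤ 3 * (p+1)^(2*p*(p+3)) := by
  intro p hp
  induction p, hp using Nat.le_induction with
  | base => norm_num [Nat.factorial]
  | succ p hp ih =>
    have hc : 0 < (p+2)^(2*p*(p+1)) * (p+1)^(2*p*(p+3)) := by positivity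
    refine Nat.le_of_mul_le_mul_right ?_ hc
    calc 4 * ((p+1).factorial)^4 * (p+1+2)^(2*(p+1)*(p+1+1)) * ((p+2)^(2*p*(p+1)) * (p+1)^(2*p*(p+3)))
        = (4 * (p.factorial)^4 * (p+2)^(2*p*(p+1)))
            * ((p+1)^(2*(p+1)*(p+2)) * (p+3)^(2*(p+1)*(p+2))) := by
          rw [Nat.factorial_succ]; ring
      _ ≤ (3 * (p+1)^(2*p*(p+3))) * ((p+2)^(4*(p+1)*(p+2))) := by
          refine Nat.mul_le_mul ih ?_
          calc (p+1)^(2*(p+1)*(p+2)) * (p+3)^(2*(p+1)*(p+2))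
              = ((p+1)*(p+3))^(2*(p+1)*(p+2)) := (mul_pow _ _ _).symm
            _ ≤ ((p+2)^2)^(2*(p+1)*(p+2)) := Nat.pow_le_pow_left (by nlinarith) _
            _ = (p+2)^(4*(p+1)*(p+2)) := by rw [← pow_mul]; congr 1; ring
      _ = 3 * (p+1+1)^(2*(p+1)*(p+1+3)) * ((p+2)^(2*p*(p+1)) * (p+1)^(2*p*(p+3))) := by ring

lemma natA' (p : ℕ) (hp : 1 ≤ p) :
    4 * (p.factorial)^(2*(p+1)*(p+2)) * ((p+2).factorial)^(2*p*(p+1))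
      ≤ 3 * ((p+1).factorial)^(4*p*(p+2)) := by
  have h := natA p hp
  have e1 : 4 * (p.factorial)^(2*(p+1)*(p+2)) * ((p+2).factorial)^(2*p*(p+1))
      = (4 * (p.factorial)^4 * (p+2)^(2*p*(p+1)))
        * ((p.factorial)^(4*p*(p+2)) * (p+1)^(2*p*(p+1))) := by
    rw [show (p+2).factorial = (p+2)*((p+1)*p.factorial) by
      rw [Nat.factorial_succ, Nat.factorial_succ]]
    rw [mul_pow, mul_pow]
    ring
  have e2 : 3 * ((p+1).factorial)^(4*p*(p+2))
      = (3 * (p+1)^(2*p*(p+3))) * ((p.factorial)^(4*p*(p+2)) * (p+1)^(2*p*(p+1))) := by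
    rw [Nat.factorial_succ, mul_pow]; ring
  rw [e1, e2]
  exact Nat.mul_le_mul h le_rfl

lemma rpow_inv_pow (x : ℝ) (hx : 0 < x) (r : ℝ) (N M : ℕ) (h : (1/r) * (N:ℝ) = (M:ℝ)) :
    (x ^ ((1:ℝ)/r)) ^ N = x ^ M := by
  rw [← Real.rpow_natCast (x ^ ((1:ℝ)/r)) N, ← Real.rpow_mul hx.le, h, Real.rpow_natCast]

lemma key_s9 (q : ℕ) : b (q+2) * b (q+4) ≤ b (q+3)^2 := by
  have h2 : b (q+2) = (((q+1).factorial : ℝ) * rho) ^ ((1:ℝ)/((q:ℝ)+1)) := by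
    rw [b_eval]
  have h3 : b (q+3) = (((q+2).factorial : ℝ) * rho) ^ ((1:ℝ)/((q:ℝ)+2)) := by
    rw [show q+3 = (q+1)+2 by omega, b_eval]; push_cast; ring_nf
  have h4 : b (q+4) = (((q+3).factorial : ℝ) * rho) ^ ((1:ℝ)/((q:ℝ)+3)) := by
    rw [show q+4 = (q+2)+2 by omega, b_eval]; push_cast; ring_nf
  set x : ℝ := ((q+1).factorial : ℝ) * rho with hxdef
  set y : ℝ := ((q+2).factorial : ℝ) * rho with hydef
  set z : ℝ := ((q+3).factorial : ℝ) * rho with hzdef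
  have hx : 0 < x := mul_pos (by positivity) rho_pos
  have hy : 0 < y := mul_pos (by positivity) rho_pos
  have hz : 0 < z := mul_pos (by positivity) rho_pos
  rw [h2, h3, h4]
  have c1 : ((q:ℝ)+1) ≠ 0 := by positivity
  have c2 : ((q:ℝ)+2) ≠ 0 := by positivity
  have c3 : ((q:ℝ)+3) ≠ 0 := by positivity
  refine le_of_pow_le_pow_left₀ (n := 2*(q+1)*(q+2)*(q+3)) (by positivity) (by positivity) ?_
  rw [mul_pow]
  rw [rpow_inv_pow x hx ((q:ℝ)+1) (2*(q+1)*(q+2)*(q+3)) (2*(q+2)*(q+3))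
    (by push_cast; field_simp; try ring)]
  rw [rpow_inv_pow z hz ((q:ℝ)+3) (2*(q+1)*(q+2)*(q+3)) (2*(q+1)*(q+2))
    (by push_cast; field_simp; try ring)]
  rw [← pow_mul, rpow_inv_pow y hy ((q:ℝ)+2) (2*(2*(q+1)*(q+2)*(q+3))) (4*(q+1)*(q+3))
    (by push_cast; field_simp; try ring)]
  -- goal : x ^ (2*(q+2)*(q+3)) * z ^ (2*(q+1)*(q+2)) ≤ y ^ (4*(q+1)*(q+3))
  have hA := natA' (q+1) (by omega)
  -- cast to ℝ
  have hA' : (4:ℝ) * ((q+1).factorial : ℝ)^(2*(q+2)*(q+3)) * ((q+3).factorial : ℝ)^(2*(q+1)*(q+2))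
      ≤ 3 * ((q+2).factorial : ℝ)^(4*(q+1)*(q+3)) := by
    have := hA
    rw [show (q+1)+1 = q+2 by omega, show (q+1)+2 = q+3 by omega] at this
    rw [show 2*((q+1)+1)*((q+1)+2) = 2*(q+2)*(q+3) by ring,
        show 2*(q+1)*((q+1)+1) = 2*(q+1)*(q+2) by ring,
        show 4*(q+1)*((q+1)+2) = 4*(q+1)*(q+3) by ring] at this
    exact_mod_cast this
  have hrho : rho ^ (2*(q+2)*(q+3)) * rho ^ (2*(q+1)*(q+2))
      = rho ^ (4*(q+1)*(q+3)) * (4/3 : ℝ) := by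
    rw [← pow_add, ← rho_pow_four, ← pow_add]
    congr 1
    ring
  have hre : 0 < rho ^ (4*(q+1)*(q+3)) := pow_pos rho_pos _
  rw [hxdef, hydef, hzdef, mul_pow, mul_pow, mul_pow]
  calc ((q+1).factorial : ℝ)^(2*(q+2)*(q+3)) * rho^(2*(q+2)*(q+3))
        * (((q+3).factorial : ℝ)^(2*(q+1)*(q+2)) * rho^(2*(q+1)*(q+2)))
      = (((q+1).factorial : ℝ)^(2*(q+2)*(q+3)) * ((q+3).factorial : ℝ)^(2*(q+1)*(q+2)) * (4/3))
        * rho ^ (4*(q+1)*(q+3)) := by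
        rw [show ((q+1).factorial : ℝ)^(2*(q+2)*(q+3)) * rho^(2*(q+2)*(q+3))
            * (((q+3).factorial : ℝ)^(2*(q+1)*(q+2)) * rho^(2*(q+1)*(q+2)))
          = ((q+1).factorial : ℝ)^(2*(q+2)*(q+3)) * ((q+3).factorial : ℝ)^(2*(q+1)*(q+2))
            * (rho^(2*(q+2)*(q+3)) * rho^(2*(q+1)*(q+2))) by ring, hrho]
        ring
    _ ≤ ((q+2).factorial : ℝ)^(4*(q+1)*(q+3)) * rho ^ (4*(q+1)*(q+3)) := by
        refine mul_le_mul_of_nonneg_right ?_ hre.le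
        linarith

lemma key' (k : ℕ) (hk : 2 ≤ k) : b k * b (k+2) ≤ b (k+1)^2 := by
  obtain ⟨q, rfl⟩ : ∃ q, k = q + 2 := ⟨k - 2, by omega⟩
  have := key_s9 q
  rw [show q+2+2 = q+4 by omega, show q+2+1 = q+3 by omega]
  exact this

lemma r_le (j k : ℕ) (hj : 2 ≤ j) (hjk : j ≤ k) :
    b j * b (k+1) ≤ b (j+1) * b k := by
  induction k, hjk using Nat.le_induction with
  | base => rw [mul_comm]
  | succ k hk ih =>
    have hkey := key' k (hj.trans hk)
    have H : (b j * b (k+2)) * (b k * b (k+1)) ≤ (b (j+1) * b (k+1)) * (b k * b (k+1)) := by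
      calc (b j * b (k+2)) * (b k * b (k+1))
          = (b j * b (k+1)) * (b k * b (k+2)) := by ring
        _ ≤ (b (j+1) * b k) * (b (k+1)^2) :=
            mul_le_mul ih hkey (le_of_lt (mul_pos (b_pos _) (b_pos _)))
              (le_of_lt (mul_pos (b_pos _) (b_pos _)))
        _ = (b (j+1) * b (k+1)) * (b k * b (k+1)) := by ring
    have := le_of_mul_le_mul_right H (mul_pos (b_pos k) (b_pos (k+1)))
    rw [show k+1+1 = k+2 by omega]
    exact this

lemma b_half : ∀ s j : ℕ, s + 2 ≤ j → b 2 * b (j + s) ≤ b (s+2) * b j := by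
  intro s
  induction s with
  | zero => intro j h; simp
  | succ s ih =>
    intro j h
    have h1 := ih (j+1) (by omega)
    have h2 := r_le (s+2) j (by omega) (by omega)
    rw [show j + (s+1) = (j+1) + s by omega]
    calc b 2 * b ((j+1)+s) ≤ b (s+2) * b (j+1) := h1
      _ ≤ b (s+2+1) * b j := h2
      _ = b (s+1+2) * b j := by rw [show s+2+1 = s+1+2 by omega]

lemma b_gen (s j : ℕ) (hj : 2 ≤ j) : b 2 * b (j + s) ≤ b (s+2) * b j := by
  rcases le_or_gt (s+2) j with h | h
  · exact b_half s j h
  · have h2 := b_half (j-2) (s+2) (by omega)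
    rw [show s + 2 + (j-2) = j + s by omega, show j - 2 + 2 = j by omega] at h2
    rw [mul_comm (b (s+2))]
    exact h2

theorem b_logconcave (m n : ℕ) (hm : 2 ≤ m) (hmn : m ≤ n) :
    b 2 * b n ≤ b m * b (n - m + 2) := by
  have h := b_gen (m-2) (n-m+2) (by omega)
  rw [show n - m + 2 + (m-2) = n by omega, show m - 2 + 2 = m by omega] at h
  exact h
end
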